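/- The Dirac complexity of G is positive if and only if the sign-less Euler–Poincaré number Σ_k (v_k − b_k)/2 is even. -/

import Mathlib

/-!
Write `d` for the total exterior derivative, so that `D = d + dᵀ` and `d² = 0`. Then
`ker D = ker d ∩ ker dᵀ`, while `ker d + ker dᵀ` is the whole space (it contains
`im d ⊕ (im d)^⊥`); hence `rank D = 2 rank d`. The grading `γ = (−1)^k` anticommutes with `D`,
so the spectrum of `D` is symmetric about `0`: exactly `rank d` eigenvalues are negative, and the
product of the nonzero eigenvalues has the sign `(−1)^(rank d)`. Finally
`v_k − b_k = rank d_k + rank d_{k−1}`, so that `∑_k (v_k − b_k) / 2 = ∑_k rank d_k = rank d`.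
-/

open Matrix Finset BigOperators

variable {V : Type*} [Fintype V] [LinearOrder V]

/-- Incidence coefficient between finsets `t` and `s`: it is `(-1)^i` if `s` is obtained from `t`
by deleting its `i`-th vertex (in the linear order on vertices), and `0` otherwise. This encodes
the exterior derivative `(d f)(x_0,…,x_{k+1}) = ∑ i (−1)^i f(x_0,…,x̂_i,…,x_{k+1})` on simplices
whose vertices are ordered increasingly. -/
def dEntry (t s : Finset V) : ℝ :=
  ∑ v ∈ t, if s = t.erase v then (-1 : ℝ) ^ (t.filter (· < v)).card else 0

variable (G : SimpleGraph V) [DecidableRel G.Adj]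

/-- The set `𝒢_k` of `k`-simplices of `G`, i.e. the complete subgraphs on `k+1` vertices,
encoded as the `(k+1)`-cliques of `G`.  `Ω_k = Cl G k → ℝ` is the space of `k`-forms. -/
abbrev Cl (k : ℕ) := {s : Finset V // s ∈ G.cliqueFinset (k + 1)}

/-- The set `𝒢` of all simplices (nonempty complete subgraphs) of `G`; the total space of forms
is `Ω = ⊕_k Ω_k = Simp G → ℝ`. -/
abbrev Simp := {s : Finset V // s.Nonempty ∧ s ∈ G.cliqueFinset s.card}

/-- The exterior derivative `d_k : Ω_k → Ω_{k+1}` as a matrix (its transpose is `d_k^*`). -/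
def dMat (k : ℕ) : Matrix (Cl G (k + 1)) (Cl G k) ℝ := fun t s => dEntry t.1 s.1

/-- The Laplace–Beltrami block `L_p = d_p^* d_p + d_{p-1} d_{p-1}^*` on `Ω_p` (with `d_{-1} = 0`). -/
def Lmat : (p : ℕ) → Matrix (Cl G p) (Cl G p) ℝ
  | 0 => (dMat G 0)ᵀ * dMat G 0
  | (k + 1) => (dMat G (k + 1))ᵀ * dMat G (k + 1) + dMat G k * (dMat G k)ᵀ

/-- The total exterior derivative `d = ⊕_k d_k` on `Ω`, as a matrix on the simplex set. -/
def dTot : Matrix (Simp G) (Simp G) ℝ := fun t s => dEntry t.1 s.1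

/-- The Dirac operator `D = d + d^*` of `G`, as a symmetric matrix on the simplex set. -/
def Dmat : Matrix (Simp G) (Simp G) ℝ := dTot G + (dTot G)ᵀ

/-- The Euler characteristic `χ(G) = ∑_k (−1)^k v_k = ∑_{x ∈ 𝒢} (−1)^{dim x}`. -/
def chi : ℤ := ∑ s : Simp G, (-1) ^ (s.1.card - 1)

/-- The supertrace `str(A) = tr(γ A)` where `γ` acts by `(−1)^k` on `Ω_k`. -/
def str {R : Type*} [CommRing R] (A : Matrix (Simp G) (Simp G) R) : R :=
  ∑ s : Simp G, (-1) ^ (s.1.card - 1) * A s s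

/-- The `k`-th Betti number `b_k = dim ker d_k − rank d_{k−1}` (with `d_{−1} = 0`). -/
noncomputable def betti : ℕ → ℕ
  | 0 => Module.finrank ℝ (LinearMap.ker (dMat G 0).mulVecLin)
  | (k + 1) => Module.finrank ℝ (LinearMap.ker (dMat G (k + 1)).mulVecLin) - (dMat G k).rank

section Incidence

variable {α : Type*} [LinearOrder α]

lemma exists_eq_erase_of_dEntry_ne_zero {t s : Finset α} (h : dEntry t s ≠ 0) :
    ∃ v ∈ t, s = t.erase v := by
  by_contra! hs
  exact h (sum_eq_zero fun v hv => if_neg (hs v hv))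

lemma card_add_one_of_dEntry_ne_zero {t s : Finset α} (h : dEntry t s ≠ 0) :
    s.card + 1 = t.card := by
  obtain ⟨v, hv, rfl⟩ := exists_eq_erase_of_dEntry_ne_zero h
  exact card_erase_add_one hv

lemma sum_dEntry_mul [Fintype α] (t : Finset α) (f : Finset α → ℝ) :
    ∑ s, dEntry t s * f s = ∑ v ∈ t, (-1) ^ #{w ∈ t | w < v} * f (t.erase v) := by
  simp only [dEntry, sum_mul, ite_mul, zero_mul]
  rw [sum_comm]
  exact sum_congr rfl fun v _ => by simp

/-- Deleting `v` and then `w`, or `w` and then `v`, picks up opposite signs. -/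
lemma neg_one_pow_erase_antisymm {t : Finset α} {v w : α} (hv : v ∈ t) (hvw : v < w) :
    (-1 : ℝ) ^ #{u ∈ t | u < v} * (-1) ^ #{u ∈ t.erase v | u < w}
      = -((-1) ^ #{u ∈ t | u < w} * (-1) ^ #{u ∈ t.erase w | u < v}) := by
  have hvw' : v ∈ {u ∈ t | u < w} := mem_filter.mpr ⟨hv, hvw⟩
  have h_erase_v : #{u ∈ t.erase v | u < w} + 1 = #{u ∈ t | u < w} := by
    rw [filter_erase, card_erase_add_one hvw']
  have h_erase_w : {u ∈ t.erase w | u < v} = {u ∈ t | u < v} := by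
    rw [filter_erase, erase_eq_of_notMem]
    simp [hvw.le]
  rw [h_erase_w, ← h_erase_v, pow_succ]
  ring

/-- `d² = 0`: the terms deleting first `v` then `w`, and first `w` then `v`, cancel in pairs. -/
lemma sum_sign_mul_dEntry_erase (t r : Finset α) :
    ∑ v ∈ t, (-1 : ℝ) ^ #{u ∈ t | u < v} * dEntry (t.erase v) r = 0 := by
  simp only [dEntry, mul_sum, mul_ite, mul_zero]
  rw [sum_sigma']
  refine sum_involution (fun p _ => ⟨p.2, p.1⟩) ?_ ?_ ?_ (fun _ _ => rfl)
  · rintro ⟨v, w⟩ hp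
    simp only [mem_sigma, mem_erase] at hp
    obtain ⟨hv, hwv, hw⟩ := hp
    simp only [erase_right_comm (a := v) (b := w)]
    split_ifs
    · rcases hwv.lt_or_gt with h | h
      · rw [neg_one_pow_erase_antisymm hw h]; ring
      · rw [neg_one_pow_erase_antisymm hv h]; ring
    · ring
  · rintro ⟨v, w⟩ hp _ h
    simp only [mem_sigma, mem_erase] at hp
    exact hp.2.1 (congrArg Sigma.fst h)
  · rintro ⟨v, w⟩ hp
    simp only [mem_sigma, mem_erase] at hp ⊢
    exact ⟨hp.2.2, hp.2.1.symm, hp.1⟩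

end Incidence

lemma sum_subtype_eq_sum_of_ne_zero {ι M : Type*} [Fintype ι] [AddCommMonoid M]
    {p : ι → Prop} [Fintype (Subtype p)] (f : ι → M) (h : ∀ i, f i ≠ 0 → p i) :
    ∑ i : Subtype p, f i = ∑ i, f i := by
  classical
  rw [← sum_filter_of_ne fun i _ => h i]
  exact (sum_subtype _ (by simp) f).symm

lemma Matrix.rank_add_finrank_ker {m n K : Type*} [Fintype m] [Fintype n] [Field K]
    (A : Matrix m n K) :
    A.rank + Module.finrank K (LinearMap.ker A.mulVecLin) = Fintype.card n := by
  rw [Matrix.rank, LinearMap.finrank_range_add_finrank_ker, Module.finrank_fintype_fun_eq_card]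

lemma Matrix.dotProduct_mulVec_transpose_mulVec_of_mul_self_eq_zero {n R : Type*} [Fintype n]
    [CommSemiring R] {A : Matrix n n R} (hA : A * A = 0) (x : n → R) :
    (Aᵀ *ᵥ x) ⬝ᵥ (A *ᵥ x) = 0 := by
  rw [dotProduct_mulVec, mulVec_transpose, vecMul_vecMul, hA, vecMul_zero, zero_dotProduct]

section SquareZero

variable {n K : Type*} [Fintype n] [Field K] [LinearOrder K] [IsStrictOrderedRing K]
  {A : Matrix n n K}

lemma Matrix.ker_add_transpose_of_mul_self_eq_zero (hA : A * A = 0) :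
    LinearMap.ker (A + Aᵀ).mulVecLin
      = LinearMap.ker A.mulVecLin ⊓ LinearMap.ker Aᵀ.mulVecLin := by
  ext x
  simp only [LinearMap.mem_ker, Submodule.mem_inf, mulVecLin_apply, add_mulVec]
  refine ⟨fun hx => ?_, fun ⟨h₁, h₂⟩ => by rw [h₁, h₂, add_zero]⟩
  have hAt : Aᵀ *ᵥ x = -(A *ᵥ x) := eq_neg_of_add_eq_zero_right hx
  have hAx : A *ᵥ x = 0 := by
    have := dotProduct_mulVec_transpose_mulVec_of_mul_self_eq_zero hA x
    rwa [hAt, neg_dotProduct, neg_eq_zero, dotProduct_self_eq_zero] at this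
  exact ⟨hAx, by rw [hAt, hAx, neg_zero]⟩

lemma Matrix.range_inf_ker_transpose :
    LinearMap.range A.mulVecLin ⊓ LinearMap.ker Aᵀ.mulVecLin = ⊥ := by
  rw [Submodule.eq_bot_iff]
  rintro _ ⟨⟨y, rfl⟩, hy⟩
  rw [SetLike.mem_coe, LinearMap.mem_ker, mulVecLin_apply, mulVecLin_apply, mulVec_transpose] at hy
  rw [mulVecLin_apply, ← dotProduct_self_eq_zero, dotProduct_mulVec, hy, zero_dotProduct]

lemma Matrix.ker_sup_ker_transpose_of_mul_self_eq_zero (hA : A * A = 0) :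
    LinearMap.ker A.mulVecLin ⊔ LinearMap.ker Aᵀ.mulVecLin = ⊤ := by
  have h_range_le : LinearMap.range A.mulVecLin ≤ LinearMap.ker A.mulVecLin := by
    rintro _ ⟨x, rfl⟩
    rw [LinearMap.mem_ker, ← LinearMap.comp_apply, ← mulVecLin_mul, hA, mulVecLin_zero,
      LinearMap.zero_apply]
  have h_range_sup : LinearMap.range A.mulVecLin ⊔ LinearMap.ker Aᵀ.mulVecLin = ⊤ := by
    refine Submodule.eq_top_of_finrank_eq ?_
    have h_dim := Submodule.finrank_sup_add_finrank_inf_eq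
      (LinearMap.range A.mulVecLin) (LinearMap.ker Aᵀ.mulVecLin)
    have h_transpose := Aᵀ.rank_add_finrank_ker
    rw [range_inf_ker_transpose, finrank_bot, add_zero] at h_dim
    rw [rank_transpose] at h_transpose
    rw [Module.finrank_fintype_fun_eq_card, ← h_transpose, h_dim]
    rfl
  exact top_le_iff.mp (h_range_sup ▸ sup_le_sup_right h_range_le _)

lemma Matrix.rank_add_transpose_of_mul_self_eq_zero (hA : A * A = 0) :
    (A + Aᵀ).rank = 2 * A.rank := by
  have h_dim := Submodule.finrank_sup_add_finrank_inf_eq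
    (LinearMap.ker A.mulVecLin) (LinearMap.ker Aᵀ.mulVecLin)
  rw [ker_sup_ker_transpose_of_mul_self_eq_zero hA, finrank_top, Module.finrank_fintype_fun_eq_card,
    ← ker_add_transpose_of_mul_self_eq_zero hA] at h_dim
  have h_sum := (A + Aᵀ).rank_add_finrank_ker
  have h_A := A.rank_add_finrank_ker
  have h_At := Aᵀ.rank_add_finrank_ker
  rw [rank_transpose] at h_At
  omega

end SquareZero

lemma Matrix.charpoly_conj_of_mul_self_eq_one {n R : Type*} [Fintype n] [DecidableEq n]
    [CommRing R] {P : Matrix n n R} (hP : P * P = 1) (A : Matrix n n R) :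
    (P * A * P).charpoly = A.charpoly := by
  rw [charpoly_mul_comm, ← mul_assoc, hP, one_mul]

section SymmetricSpectrum

open Polynomial

variable {𝕜 n : Type*} [RCLike 𝕜] [Fintype n] [DecidableEq n] {A : Matrix n n 𝕜}

lemma Matrix.IsHermitian.charpoly_neg (hA : A.IsHermitian) :
    (-A).charpoly = ∏ i, (X - C (-(hA.eigenvalues i : 𝕜))) := by
  conv_lhs => rw [hA.spectral_theorem, Unitary.conjStarAlgAut_apply, ← neg_mul, ← mul_neg,
    charpoly_mul_comm, ← mul_assoc]
  simp [charpoly_diagonal]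

lemma Matrix.IsHermitian.map_neg_eigenvalues (hA : A.IsHermitian)
    (h : (-A).charpoly = A.charpoly) :
    univ.val.map (fun i => -hA.eigenvalues i) = univ.val.map hA.eigenvalues := by
  have h_roots := congrArg roots h
  rw [hA.roots_charpoly_eq_eigenvalues, hA.charpoly_neg, roots_prod _ _
    (prod_ne_zero_iff.mpr fun i _ => X_sub_C_ne_zero _)] at h_roots
  refine Multiset.map_injective (RCLike.ofReal_injective (K := 𝕜)) ?_
  simpa [Multiset.map_map, Function.comp_def] using h_roots

lemma Matrix.IsHermitian.card_eigenvalues_neg (hA : A.IsHermitian)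
    (h : (-A).charpoly = A.charpoly) :
    #{i | hA.eigenvalues i < 0} = #{i | 0 < hA.eigenvalues i} := by
  have h_count := congrArg (Multiset.countP (· < 0)) (hA.map_neg_eigenvalues h)
  simp only [Multiset.countP_map, neg_lt_zero] at h_count
  exact h_count.symm

end SymmetricSpectrum

lemma zero_lt_prod_filter_ne_zero_iff {ι R : Type*} [CommRing R] [LinearOrder R]
    [IsStrictOrderedRing R] (s : Finset ι) (f : ι → R) :
    0 < ∏ i ∈ s with f i ≠ 0, f i ↔ Even #{i ∈ s | f i < 0} := by
  have h_split (i : ι) : f i = (if f i < 0 then -1 else 1) * |f i| := by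
    split_ifs with h
    · rw [abs_of_neg h, neg_one_mul, neg_neg]
    · rw [abs_of_nonneg (not_lt.mp h), one_mul]
  have h_neg : (s.filter (f · ≠ 0)).filter (f · < 0) = s.filter (f · < 0) := by
    rw [filter_filter]
    exact filter_congr fun i _ => and_iff_right_of_imp LT.lt.ne
  have h_sign : ∏ i ∈ s with f i ≠ 0, f i
      = (-1) ^ #{i ∈ s | f i < 0} * ∏ i ∈ s with f i ≠ 0, |f i| := by
    rw [prod_congr rfl fun i _ => h_split i, prod_mul_distrib, prod_ite, prod_const, prod_const_one,
      mul_one, h_neg]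
  have h_abs : 0 < ∏ i ∈ s with f i ≠ 0, |f i| :=
    prod_pos fun i hi => abs_pos.mpr (mem_filter.mp hi).2
  rw [h_sign, mul_pos_iff_of_pos_right h_abs]
  rcases Nat.even_or_odd #{i ∈ s | f i < 0} with h | h
  · simp [h.neg_one_pow, h]
  · simp [h.neg_one_pow, Nat.not_even_iff_odd.mpr h]

section CliqueComplex

variable {G}

lemma erase_mem_cliqueFinset {t : Finset V} {n : ℕ} (ht : t ∈ G.cliqueFinset (n + 1)) {v : V}
    (hv : v ∈ t) : t.erase v ∈ G.cliqueFinset n :=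
  SimpleGraph.mem_cliqueFinset_iff.mpr ((SimpleGraph.mem_cliqueFinset_iff.mp ht).erase_of_mem hv)

lemma isSimplex_of_mem_cliqueFinset {s : Finset V} {k : ℕ} (hs : s ∈ G.cliqueFinset (k + 1)) :
    s.Nonempty ∧ s ∈ G.cliqueFinset s.card := by
  have hcard := (SimpleGraph.mem_cliqueFinset_iff.mp hs).card_eq
  exact ⟨card_pos.mp (by omega), hcard ▸ hs⟩

lemma dMat_mul_dMat (k : ℕ) : dMat G (k + 1) * dMat G k = 0 := by
  ext t r
  change ∑ s : Cl G (k + 1), dEntry t.1 s.1 * dEntry s.1 r.1 = 0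
  rw [sum_subtype_eq_sum_of_ne_zero (fun s => dEntry t.1 s * dEntry s r.1), sum_dEntry_mul,
    sum_sign_mul_dEntry_erase]
  intro s hs
  obtain ⟨v, hv, rfl⟩ := exists_eq_erase_of_dEntry_ne_zero (left_ne_zero_of_mul hs)
  exact erase_mem_cliqueFinset t.2 hv

lemma dTot_mul_dTot : dTot G * dTot G = 0 := by
  ext t r
  change ∑ s : Simp G, dEntry t.1 s.1 * dEntry s.1 r.1 = 0
  rw [sum_subtype_eq_sum_of_ne_zero (fun s => dEntry t.1 s * dEntry s r.1), sum_dEntry_mul,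
    sum_sign_mul_dEntry_erase]
  intro s hs
  obtain ⟨v, hv, rfl⟩ := exists_eq_erase_of_dEntry_ne_zero (left_ne_zero_of_mul hs)
  have hcard := card_add_one_of_dEntry_ne_zero (right_ne_zero_of_mul hs)
  obtain ⟨-, ht⟩ := t.2
  rw [← card_erase_add_one hv, ← hcard] at ht
  exact isSimplex_of_mem_cliqueFinset (erase_mem_cliqueFinset ht hv)

def Cl.toSimp {k : ℕ} (s : Cl G k) : Simp G := ⟨s.1, isSimplex_of_mem_cliqueFinset s.2⟩

def clEquivCardEq (k : ℕ) : Cl G k ≃ {s : Simp G // s.1.card = k + 1} where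
  toFun s := ⟨s.toSimp, (SimpleGraph.mem_cliqueFinset_iff.mp s.2).card_eq⟩
  invFun s := ⟨s.1.1, Eq.subst (motive := fun n => s.1.1 ∈ G.cliqueFinset n) s.2 s.1.2.2⟩
  left_inv _ := rfl
  right_inv _ := rfl

variable (G) in
def simpEquivSigma {N : ℕ} (hN : Fintype.card V ≤ N) : Simp G ≃ Σ k : Fin N, Cl G k :=
  (Equiv.sigmaFiberEquiv fun s : Simp G => (⟨s.1.card - 1, by
      have := card_le_univ s.1; have := s.2.1.card_pos; omega⟩ : Fin N)).symm.trans
    (Equiv.sigmaCongrRight fun k => ((Equiv.subtypeEquivRight fun s => by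
      have := s.2.1.card_pos; simp only [Fin.ext_iff]; omega).trans
        (clEquivCardEq (k : ℕ)).symm))

variable (G) in
def formsEquiv {N : ℕ} (hN : Fintype.card V ≤ N) :
    (Simp G → ℝ) ≃ₗ[ℝ] Π k : Fin N, Cl G k → ℝ :=
  (LinearEquiv.funCongrLeft ℝ ℝ (simpEquivSigma G hN).symm).trans
    (LinearEquiv.piCurry ℝ fun _ _ => ℝ)

lemma formsEquiv_apply {N : ℕ} (hN : Fintype.card V ≤ N) (x : Simp G → ℝ) (k : Fin N) :
    formsEquiv G hN x k = fun s => x s.toSimp := by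
  simp [formsEquiv]; rfl

lemma dTot_mulVec_toSimp (x : Simp G → ℝ) {k : ℕ} (t : Cl G (k + 1)) :
    (dTot G *ᵥ x) t.toSimp = (dMat G k *ᵥ fun s => x s.toSimp) t := by
  change ∑ s : Simp G, dEntry t.1 s.1 * x s = ∑ s : Cl G k, dEntry t.1 s.1 * x s.toSimp
  rw [← sum_subtype_eq_sum_of_ne_zero (p := fun s : Simp G => s.1.card = k + 1)]
  · exact (Fintype.sum_equiv (clEquivCardEq k) _ _ fun _ => rfl).symm
  · intro s hs
    have := card_add_one_of_dEntry_ne_zero (left_ne_zero_of_mul hs)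
    rw [(SimpleGraph.mem_cliqueFinset_iff.mp t.2).card_eq] at this
    exact Nat.succ_injective this

lemma dTot_mulVec_of_card_eq_one (x : Simp G → ℝ) {t : Simp G} (ht : t.1.card = 1) :
    (dTot G *ᵥ x) t = 0 := by
  refine sum_eq_zero fun s _ => ?_
  by_contra hs
  have := card_add_one_of_dEntry_ne_zero (left_ne_zero_of_mul hs)
  exact s.2.1.card_pos.ne' (by omega)

lemma dTot_mulVec_eq_zero_iff {N : ℕ} (hN : Fintype.card V ≤ N) (x : Simp G → ℝ) :
    dTot G *ᵥ x = 0 ↔ ∀ k : Fin N, dMat G k *ᵥ formsEquiv G hN x k = 0 := by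
  simp only [formsEquiv_apply, funext_iff, Pi.zero_apply]
  refine ⟨fun hx k t => ?_, fun hx t => ?_⟩
  · rw [← dTot_mulVec_toSimp, hx]
  · obtain ⟨hne, ht⟩ := t.2
    obtain ⟨k, hk⟩ : ∃ k, t.1.card = k + 1 := Nat.exists_eq_add_one.mpr hne.card_pos
    rcases k with _ | k
    · exact dTot_mulVec_of_card_eq_one x hk
    · have hkN : k < N := by have := card_le_univ t.1; omega
      rw [hk] at ht
      exact (dTot_mulVec_toSimp x ⟨t.1, ht⟩).trans (hx ⟨k, hkN⟩ ⟨t.1, ht⟩)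

variable (G) in
def kerDTotEquiv {N : ℕ} (hN : Fintype.card V ≤ N) :
    LinearMap.ker (dTot G).mulVecLin ≃ₗ[ℝ]
      Π k : Fin N, LinearMap.ker (dMat G k).mulVecLin where
  toFun x k := ⟨formsEquiv G hN x k,
    LinearMap.mem_ker.mpr ((dTot_mulVec_eq_zero_iff hN x.1).mp (LinearMap.mem_ker.mp x.2) k)⟩
  invFun y := ⟨(formsEquiv G hN).symm fun k => y k, LinearMap.mem_ker.mpr <|
    (dTot_mulVec_eq_zero_iff hN _).mpr fun k => by
      rw [LinearEquiv.apply_symm_apply]; exact LinearMap.mem_ker.mp (y k).2⟩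
  map_add' _ _ := rfl
  map_smul' _ _ := rfl
  left_inv x := Subtype.ext ((formsEquiv G hN).symm_apply_apply x)
  right_inv y := funext fun k => Subtype.ext (congrFun ((formsEquiv G hN).apply_symm_apply _) k)

lemma rank_dTot {N : ℕ} (hN : Fintype.card V ≤ N) :
    (dTot G).rank = ∑ k : Fin N, (dMat G k).rank := by
  have hker := (kerDTotEquiv G hN).finrank_eq
  have hcard := Fintype.card_congr (simpEquivSigma G hN)
  rw [Module.finrank_pi_fintype] at hker
  rw [Fintype.card_sigma] at hcard
  have hdTot := (dTot G).rank_add_finrank_ker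
  have hdMat : ∑ k : Fin N,
      ((dMat G k).rank + Module.finrank ℝ (LinearMap.ker (dMat G k).mulVecLin))
        = ∑ k : Fin N, Fintype.card (Cl G k) :=
    Fintype.sum_congr _ _ fun k => (dMat G k).rank_add_finrank_ker
  rw [sum_add_distrib] at hdMat
  omega

lemma rank_dMat_le_finrank_ker (k : ℕ) :
    (dMat G k).rank ≤ Module.finrank ℝ (LinearMap.ker (dMat G (k + 1)).mulVecLin) := by
  refine Submodule.finrank_mono ?_
  rintro _ ⟨x, rfl⟩
  rw [LinearMap.mem_ker, ← LinearMap.comp_apply, ← Matrix.mulVecLin_mul, dMat_mul_dMat,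
    Matrix.mulVecLin_zero, LinearMap.zero_apply]

lemma rank_dMat_of_card_le {k : ℕ} (hk : Fintype.card V ≤ k + 1) : (dMat G k).rank = 0 := by
  have : IsEmpty (Cl G (k + 1)) := ⟨fun t => by
    have := (SimpleGraph.mem_cliqueFinset_iff.mp t.2).card_eq
    have := card_le_univ t.1
    omega⟩
  exact Nat.eq_zero_of_le_zero ((dMat G k).rank_le_card_height.trans_eq Fintype.card_eq_zero)

lemma card_cliqueFinset_eq (k : ℕ) :
    #(G.cliqueFinset (k + 1))
      = (dMat G k).rank + Module.finrank ℝ (LinearMap.ker (dMat G k).mulVecLin) :=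
  ((dMat G k).rank_add_finrank_ker.trans (Fintype.card_coe _)).symm

lemma card_cliqueFinset_sub_betti_zero :
    #(G.cliqueFinset 1) - betti G 0 = (dMat G 0).rank := by
  rw [card_cliqueFinset_eq, betti, Nat.add_sub_cancel]

lemma card_cliqueFinset_sub_betti_succ (k : ℕ) :
    #(G.cliqueFinset (k + 2)) - betti G (k + 1) = (dMat G (k + 1)).rank + (dMat G k).rank := by
  have := rank_dMat_le_finrank_ker (G := G) k
  rw [card_cliqueFinset_eq, betti]
  omega

lemma sum_card_cliqueFinset_sub_betti {N : ℕ} (hN : Fintype.card V ≤ N) :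
    ∑ k ∈ range N, (#(G.cliqueFinset (k + 1)) - betti G k) = 2 * (dTot G).rank := by
  rw [rank_dTot hN, Fin.sum_univ_eq_sum_range (fun k => (dMat G k).rank)]
  rcases N with _ | M
  · simp
  have h_shift := sum_range_succ' (fun k => (dMat G k).rank) M
  have h_top := sum_range_succ (fun k => (dMat G k).rank) M
  rw [rank_dMat_of_card_le hN, add_zero] at h_top
  rw [sum_range_succ', card_cliqueFinset_sub_betti_zero]
  simp only [card_cliqueFinset_sub_betti_succ, sum_add_distrib]
  omega

variable (G) in
def gradingMat : Matrix (Simp G) (Simp G) ℝ := diagonal fun s => (-1) ^ (s.1.card - 1)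

lemma gradingMat_mul_self : gradingMat G * gradingMat G = 1 := by
  rw [gradingMat, diagonal_mul_diagonal, ← diagonal_one]
  simp_rw [← mul_pow, neg_one_mul, neg_neg, one_pow]

lemma odd_of_Dmat_ne_zero {t s : Simp G} (h : Dmat G t s ≠ 0) :
    Odd (t.1.card - 1 + (s.1.card - 1)) := by
  have ht := t.2.1.card_pos
  have hs := s.2.1.card_pos
  change dEntry t.1 s.1 + dEntry s.1 t.1 ≠ 0 at h
  by_cases hts : dEntry t.1 s.1 = 0
  · rw [hts, zero_add] at h
    have := card_add_one_of_dEntry_ne_zero h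
    exact ⟨s.1.card - 2, by omega⟩
  · have := card_add_one_of_dEntry_ne_zero hts
    exact ⟨t.1.card - 2, by omega⟩

lemma gradingMat_mul_Dmat_mul_gradingMat : gradingMat G * Dmat G * gradingMat G = -Dmat G := by
  ext t s
  rw [gradingMat, mul_diagonal, diagonal_mul, neg_apply]
  by_cases h : Dmat G t s = 0
  · simp [h]
  · rw [mul_right_comm, ← pow_add, (odd_of_Dmat_ne_zero h).neg_one_pow, neg_one_mul]

lemma charpoly_neg_Dmat : (-Dmat G).charpoly = (Dmat G).charpoly := by
  rw [← gradingMat_mul_Dmat_mul_gradingMat, charpoly_conj_of_mul_self_eq_one gradingMat_mul_self]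

end CliqueComplex

/-- The Dirac complexity (the product of the nonzero eigenvalues of `D`, with multiplicity)
is positive if and only if the sign-less Euler–Poincaré number `∑_k (v_k − b_k)/2` is even. -/
theorem dirac_complexity_pos_iff (hD : (Dmat G).IsHermitian) (N : ℕ) (hN : Fintype.card V ≤ N) :
    (0 < ∏ i ∈ Finset.univ.filter (fun i => hD.eigenvalues i ≠ 0), hD.eigenvalues i) ↔
      Even ((∑ k ∈ Finset.range N, ((G.cliqueFinset (k + 1)).card - betti G k)) / 2) := by
  have h_rank : (Dmat G).rank = 2 * (dTot G).rank :=
    rank_add_transpose_of_mul_self_eq_zero dTot_mul_dTot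
  have h_nonzero : (Dmat G).rank = #{i | hD.eigenvalues i < 0} + #{i | 0 < hD.eigenvalues i} := by
    rw [hD.rank_eq_card_non_zero_eigs, Fintype.card_subtype, ← card_union_of_disjoint]
    · congr 1
      ext i
      simp only [mem_filter, mem_union, mem_univ, true_and, ne_iff_lt_or_gt]
    · exact disjoint_filter.mpr fun i _ h => (lt_asymm h)
  have h_neg : #{i | hD.eigenvalues i < 0} = (dTot G).rank := by
    have := hD.card_eigenvalues_neg charpoly_neg_Dmat
    omega
  rw [sum_card_cliqueFinset_sub_betti hN, Nat.mul_div_cancel_left _ two_pos, ← h_neg]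
  exact zero_lt_prod_filter_ne_zero_iff _ _
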